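/- arXiv:0904.1876 — 2 statements merged into one kernel-verified Lean document; each statement's English description precedes it below -/
import Mathlib

section
/- The group presented by ⟨T, U | U^2 = TU^2T, TUT = UTU⟩ is isomorphic to the group presented by ⟨S, T | S^3 = T^4 = (ST)^2⟩, via the substitution U = TS^{-1}. -/
/-- Relators for the binary octahedral group
`P₄₈ = ⟨T, U | U² = TU²T, TUT = UTU⟩`, with generator `0 = T`, `1 = U`. -/
def p48Rels : Set (FreeGroup (Fin 2)) :=
  {FreeGroup.of 1 ^ 2 *
     (FreeGroup.of 0 * FreeGroup.of 1 ^ 2 * FreeGroup.of 0)⁻¹,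
   FreeGroup.of 0 * FreeGroup.of 1 * FreeGroup.of 0 *
     (FreeGroup.of 1 * FreeGroup.of 0 * FreeGroup.of 1)⁻¹}

/-- Relators for `⟨S, T | S³ = T⁴ = (ST)²⟩`, with generator `0 = S`, `1 = T`. -/
def p48Rels' : Set (FreeGroup (Fin 2)) :=
  {FreeGroup.of 0 ^ 3 * (FreeGroup.of 1 ^ 4)⁻¹,
   FreeGroup.of 1 ^ 4 * ((FreeGroup.of 0 * FreeGroup.of 1) ^ 2)⁻¹}

/-!
Writing `a = S⁻¹`, so that `U = T a`, both sets of relations are equivalent in any group to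
`T S T = S²` and `S T S = T³`, i.e. to `a = T a² T` and `T = a T³ a`. On the `(S, T)` side this is
cancelling one letter from `(S T)² = S (T S T) = (S T S) T`. On the `(T, U)` side the braid relation
reads `T a T = a T² a`; substituted into `U² = T U² T` it leaves `a = T a² T`, and substituting
this into one `a` of the braid relation leaves `T = a T³ a`. Hence the substitutions `U ↦ T S⁻¹`
and `S ↦ U⁻¹ T` define mutually inverse homomorphisms.
-/

section Relations

variable {G : Type*} [Group G]

theorem pow_three_eq_pow_four_and_eq_mul_sq_iff {s t : G} :
    s ^ 3 = t ^ 4 ∧ t ^ 4 = (s * t) ^ 2 ↔ t * s * t = s ^ 2 ∧ s * t * s = t ^ 3 := by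
  have hs : (s * t) ^ 2 = s * (t * s * t) := by simp only [sq, mul_assoc]
  have ht : (s * t) ^ 2 = s * t * s * t := by simp only [sq, mul_assoc]
  constructor
  · rintro ⟨h₁, h₂⟩
    refine ⟨mul_left_cancel (a := s) ?_, mul_right_cancel (b := t) ?_⟩
    · rw [← hs, ← h₂, ← h₁, pow_succ']
    · rw [← ht, ← h₂, pow_succ]
  · rintro ⟨h₁, h₂⟩
    refine ⟨?_, by rw [ht, h₂, pow_succ]⟩
    calc s ^ 3 = s * (t * s * t) := by rw [h₁, pow_succ']
      _ = s * t * s * t := by simp only [mul_assoc]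
      _ = t ^ 4 := by rw [h₂, ← pow_succ]

theorem mul_mul_eq_sq_iff_inv_eq {s t : G} : t * s * t = s ^ 2 ↔ s⁻¹ = t * s⁻¹ ^ 2 * t := by
  rw [← inv_inj (a := s⁻¹), inv_inv, show (t * s⁻¹ ^ 2 * t)⁻¹ = t⁻¹ * s ^ 2 * t⁻¹ by group,
    eq_mul_inv_iff_mul_eq, eq_inv_mul_iff_mul_eq, ← mul_assoc, eq_comm]

theorem mul_mul_eq_pow_three_iff_eq_inv_mul {s t : G} :
    s * t * s = t ^ 3 ↔ t = s⁻¹ * t ^ 3 * s⁻¹ := by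
  rw [eq_mul_inv_iff_mul_eq, eq_inv_mul_iff_mul_eq, mul_assoc]

theorem mul_mul_eq_iff_eq_mul_sq_mul {a t : G} (hbraid : t * a * t = a * t ^ 2 * a) :
    a * t * a = t * a * t * a * t ↔ a = t * a ^ 2 * t := by
  rw [hbraid, show a * t ^ 2 * a * a * t = a * t * (t * a ^ 2 * t) by simp only [sq, mul_assoc],
    mul_right_inj]

theorem braid_iff_eq_mul_pow_three_mul {a t : G} (ha : a = t * a ^ 2 * t) :
    t * a * t = a * t ^ 2 * a ↔ t = a * t ^ 3 * a := by
  have : a * t ^ 2 * a = a * t ^ 3 * a * a * t :=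
    calc a * t ^ 2 * a = a * t ^ 2 * (t * a ^ 2 * t) := congrArg (a * t ^ 2 * ·) ha
      _ = a * t ^ 3 * a * a * t := by simp only [pow_succ, pow_zero, one_mul, mul_assoc]
  rw [this, mul_left_inj, mul_left_inj]

theorem sq_eq_mul_sq_mul_and_braid_iff {a t : G} :
    (t * a) ^ 2 = t * (t * a) ^ 2 * t ∧ t * (t * a) * t = t * a * t * (t * a) ↔
      a = t * a ^ 2 * t ∧ t = a * t ^ 3 * a := by
  have hsq_iff : (t * a) ^ 2 = t * (t * a) ^ 2 * t ↔ a * t * a = t * a * t * a * t := by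
    rw [show t * (t * a) ^ 2 * t = t * (t * a * t * a * t) by simp only [sq, mul_assoc],
      show (t * a) ^ 2 = t * (a * t * a) by simp only [sq, mul_assoc], mul_right_inj]
  have hbraid_iff : t * (t * a) * t = t * a * t * (t * a) ↔ t * a * t = a * t ^ 2 * a := by
    rw [show t * a * t * (t * a) = t * (a * t ^ 2 * a) by simp only [sq, mul_assoc], mul_assoc,
      mul_right_inj]
  rw [hsq_iff, hbraid_iff]
  constructor
  · rintro ⟨hsq, hbraid⟩
    have ha := (mul_mul_eq_iff_eq_mul_sq_mul hbraid).1 hsq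
    exact ⟨ha, (braid_iff_eq_mul_pow_three_mul ha).1 hbraid⟩
  · rintro ⟨ha, ht⟩
    have hbraid := (braid_iff_eq_mul_pow_three_mul ha).2 ht
    exact ⟨(mul_mul_eq_iff_eq_mul_sq_mul hbraid).2 ha, hbraid⟩

theorem p48_rels_iff_of_mul_eq {s t u : G} (h : u * s = t) :
    u ^ 2 = t * u ^ 2 * t ∧ t * u * t = u * t * u ↔ s ^ 3 = t ^ 4 ∧ t ^ 4 = (s * t) ^ 2 := by
  obtain rfl : u = t * s⁻¹ := eq_mul_inv_of_mul_eq h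
  rw [sq_eq_mul_sq_mul_and_braid_iff, pow_three_eq_pow_four_and_eq_mul_sq_iff,
    mul_mul_eq_sq_iff_inv_eq, mul_mul_eq_pow_three_iff_eq_inv_mul]

theorem lift_p48Rels_eq_one_iff (f : Fin 2 → G) :
    (∀ r ∈ p48Rels, FreeGroup.lift f r = 1) ↔
      f 1 ^ 2 = f 0 * f 1 ^ 2 * f 0 ∧ f 0 * f 1 * f 0 = f 1 * f 0 * f 1 := by
  simp only [p48Rels, Set.mem_insert_iff, Set.mem_singleton_iff, forall_eq_or_imp, forall_eq,
    map_mul, map_inv, map_pow, FreeGroup.lift_apply_of, mul_inv_eq_one]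

theorem lift_p48Rels'_eq_one_iff (f : Fin 2 → G) :
    (∀ r ∈ p48Rels', FreeGroup.lift f r = 1) ↔
      f 0 ^ 3 = f 1 ^ 4 ∧ f 1 ^ 4 = (f 0 * f 1) ^ 2 := by
  simp only [p48Rels', Set.mem_insert_iff, Set.mem_singleton_iff, forall_eq_or_imp, forall_eq,
    map_mul, map_inv, map_pow, FreeGroup.lift_apply_of, mul_inv_eq_one]

end Relations

theorem PresentedGroup.lift_of_eq_one {α : Type*} {rels : Set (FreeGroup α)} {r : FreeGroup α}
    (hr : r ∈ rels) : FreeGroup.lift (of (rels := rels)) r = 1 := by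
  rw [FreeGroup.ext_hom (FreeGroup.lift of) (mk rels) fun _ ↦ rfl, one_of_mem hr]

open PresentedGroup

theorem p48_of_rels :
    (of 1 : PresentedGroup p48Rels) ^ 2 = of 0 * of 1 ^ 2 * of 0 ∧
      (of 0 : PresentedGroup p48Rels) * of 1 * of 0 = of 1 * of 0 * of 1 :=
  (lift_p48Rels_eq_one_iff of).1 fun _ ↦ lift_of_eq_one

theorem p48'_of_rels :
    (of 0 : PresentedGroup p48Rels') ^ 3 = of 1 ^ 4 ∧
      (of 1 : PresentedGroup p48Rels') ^ 4 = (of 0 * of 1) ^ 2 :=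
  (lift_p48Rels'_eq_one_iff of).1 fun _ ↦ lift_of_eq_one

def p48ToP48' : PresentedGroup p48Rels →* PresentedGroup p48Rels' :=
  toGroup (f := ![of 1, of 1 * (of 0)⁻¹]) <| (lift_p48Rels_eq_one_iff _).2 <|
    (p48_rels_iff_of_mul_eq (inv_mul_cancel_right _ _)).2 p48'_of_rels

def p48'ToP48 : PresentedGroup p48Rels' →* PresentedGroup p48Rels :=
  toGroup (f := ![(of 1)⁻¹ * of 0, of 0]) <| (lift_p48Rels'_eq_one_iff _).2 <|
    (p48_rels_iff_of_mul_eq (mul_inv_cancel_left _ _)).1 p48_of_rels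

def p48EquivP48' : PresentedGroup p48Rels ≃* PresentedGroup p48Rels' :=
  MonoidHom.toMulEquiv p48ToP48' p48'ToP48
    (ext fun i ↦ by fin_cases i <;> simp [p48ToP48', p48'ToP48])
    (ext fun i ↦ by fin_cases i <;> simp [p48ToP48', p48'ToP48])

/-- `⟨T, U | U² = TU²T, TUT = UTU⟩ ≅ ⟨S, T | S³ = T⁴ = (ST)²⟩` via `T = T`, `U = TS⁻¹`. -/
theorem p48_presentations_isomorphic :
    ∃ e : PresentedGroup p48Rels ≃* PresentedGroup p48Rels',
      e (PresentedGroup.of 0) = (PresentedGroup.of 1 : PresentedGroup p48Rels') ∧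
      e (PresentedGroup.of 1) =
        (PresentedGroup.of 1 : PresentedGroup p48Rels') * (PresentedGroup.of 0)⁻¹ :=
  ⟨p48EquivP48', rfl, rfl⟩
end

section
/- The abelianization of P'_{8·3^k} = ⟨x, y, z | x^2 = (xy)^2 = y^2, zxz^{-1} = y, zyz^{-1} = xy, z^{3^k} = 1⟩ is isomorphic to Z/3^k. -/
/-- Relators for `P'_{8·3ᵏ} = ⟨x, y, z | x² = (xy)² = y², zxz⁻¹ = y, zyz⁻¹ = xy,
z^(3ᵏ) = 1⟩`, with generators `0 = x`, `1 = y`, `2 = z`. -/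
def pPrimeRels (k : ℕ) : Set (FreeGroup (Fin 3)) :=
  {FreeGroup.of 0 ^ 2 * ((FreeGroup.of 0 * FreeGroup.of 1) ^ 2)⁻¹,
   (FreeGroup.of 0 * FreeGroup.of 1) ^ 2 * (FreeGroup.of 1 ^ 2)⁻¹,
   FreeGroup.of 2 * FreeGroup.of 0 * (FreeGroup.of 2)⁻¹ * (FreeGroup.of 1)⁻¹,
   FreeGroup.of 2 * FreeGroup.of 1 * (FreeGroup.of 2)⁻¹ *
     (FreeGroup.of 0 * FreeGroup.of 1)⁻¹,
   FreeGroup.of 2 ^ (3 ^ k)}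

/-- The group `P'_{8·3ᵏ}`. -/
abbrev PPrime (k : ℕ) := PresentedGroup (pPrimeRels k)

/-!
In the abelianization the conjugation relations read `x = y` and `y = x * y`, so `x = y = 1`
and the abelianization is cyclic, generated by `z`, with `z ^ 3 ^ k = 1`. The assignment
`x, y ↦ 0`, `z ↦ 1` respects all relators, so it induces a map onto `ZMod (3 ^ k)`, which is
then an isomorphism.
-/

theorem MonoidHom.bijective_of_zpowers_eq_top_of_map_eq_ofAdd_one {G : Type*} [Group G]
    {n : ℕ} {g : G} (hg : Subgroup.zpowers g = ⊤) (hgn : g ^ n = 1)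
    (f : G →* Multiplicative (ZMod n)) (hf : f g = Multiplicative.ofAdd 1) :
    Function.Bijective f := by
  have hf_zpow (j : ℤ) : f (g ^ j) = Multiplicative.ofAdd (j : ZMod n) := by
    rw [map_zpow, hf, ← ofAdd_zsmul, zsmul_one]
  have mem (x : G) : ∃ j : ℤ, g ^ j = x :=
    Subgroup.mem_zpowers_iff.mp (hg ▸ Subgroup.mem_top x)
  refine ⟨(injective_iff_map_eq_one f).mpr fun x hx => ?_, fun m => ?_⟩
  · obtain ⟨j, rfl⟩ := mem x
    rw [hf_zpow, ofAdd_eq_one, ZMod.intCast_zmod_eq_zero_iff_dvd] at hx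
    obtain ⟨c, rfl⟩ := hx
    rw [zpow_mul, zpow_natCast, hgn, one_zpow]
  · obtain ⟨j, hj⟩ := ZMod.intCast_surjective (Multiplicative.toAdd m)
    exact ⟨g ^ j, by rw [hf_zpow, hj]; rfl⟩

theorem PresentedGroup.abelianization_of_mk_of_mem {α : Type*} {rels : Set (FreeGroup α)}
    {r : FreeGroup α} (hr : r ∈ rels) : Abelianization.of (PresentedGroup.mk rels r) = 1 := by
  rw [PresentedGroup.one_of_mem hr, map_one]

namespace PPrime

variable {k : ℕ}

local notation "ab" i => Abelianization.of (PresentedGroup.of (rels := pPrimeRels k) i)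

theorem abelianization_of_x : (ab 0) = 1 := by
  have hzy := PresentedGroup.abelianization_of_mk_of_mem (rels := pPrimeRels k) <|
    Set.mem_insert_of_mem _ <| Set.mem_insert_of_mem _ <| Set.mem_insert_of_mem _ <|
      Set.mem_insert _ _
  simp only [map_mul, map_inv] at hzy
  change (ab 2) * (ab 1) * (ab 2)⁻¹ * ((ab 0) * (ab 1))⁻¹ = 1 at hzy
  rw [mul_comm (ab 2), mul_inv_cancel_right] at hzy
  simpa using hzy

theorem abelianization_of_y : (ab 1) = 1 := by
  have hzx := PresentedGroup.abelianization_of_mk_of_mem (rels := pPrimeRels k) <|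
    Set.mem_insert_of_mem _ <| Set.mem_insert_of_mem _ <| Set.mem_insert _ _
  simp only [map_mul, map_inv] at hzx
  change (ab 2) * (ab 0) * (ab 2)⁻¹ * (ab 1)⁻¹ = 1 at hzx
  rwa [mul_comm (ab 2), mul_inv_cancel_right, abelianization_of_x, one_mul, inv_eq_one] at hzx

theorem zpowers_abelianization_of_z_eq_top : Subgroup.zpowers (ab 2) = ⊤ := by
  refine (Subgroup.eq_top_iff' _).mpr fun a => ?_
  obtain ⟨p, rfl⟩ := QuotientGroup.mk_surjective a
  refine PresentedGroup.generated_by _ ((Subgroup.zpowers (ab 2)).comap Abelianization.of)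
    (fun i => ?_) p
  fin_cases i
  · simp [abelianization_of_x]
  · simp [abelianization_of_y]
  · exact Subgroup.mem_zpowers _

theorem abelianization_of_z_pow : (ab 2) ^ (3 ^ k) = 1 := by
  rw [← map_pow]
  exact PresentedGroup.abelianization_of_mk_of_mem <| Set.mem_insert_of_mem _ <|
    Set.mem_insert_of_mem _ <| Set.mem_insert_of_mem _ <| Set.mem_insert_of_mem _ rfl

def toZMod (k : ℕ) : Abelianization (PPrime k) →* Multiplicative (ZMod (3 ^ k)) :=
  Abelianization.lift <| PresentedGroup.toGroup (f := ![1, 1, Multiplicative.ofAdd 1]) <| by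
    rintro r (rfl | rfl | rfl | rfl | rfl) <;> simp [← ofAdd_nsmul]

theorem toZMod_z : toZMod k (ab 2) = Multiplicative.ofAdd 1 := by
  simp [toZMod, PresentedGroup.toGroup.of]

end PPrime

theorem abelianization_pPrime_general (k : ℕ) :
    Nonempty (Abelianization (PPrime k) ≃* Multiplicative (ZMod (3 ^ k))) :=
  ⟨MulEquiv.ofBijective _ <| MonoidHom.bijective_of_zpowers_eq_top_of_map_eq_ofAdd_one
    PPrime.zpowers_abelianization_of_z_eq_top PPrime.abelianization_of_z_pow _ PPrime.toZMod_z⟩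

theorem abelianization_pPrime (k : ℕ) (hk : 1 ≤ k) :
    Nonempty (Abelianization (PPrime k) ≃* Multiplicative (ZMod (3 ^ k))) :=
  abelianization_pPrime_general k
end
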